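/- With Ω_ε = {z ∈ ℝ^{2d} : |z| ≤ 1−ε or 1 ≤ |z| ≤ 1+δ(ε)} where δ(ε) is chosen so |Ω_ε| = |B₁|, there exists C > 0 such that ‖L_{B₁}‖²_{HS} − ‖L_{Ω_ε}‖²_{HS} ≤ C ε² for all small ε > 0; consequently, since α[Ω_ε] ≥ c_d ε, the exponent 2 of the Fraenkel asymmetry in the quantitative estimate ‖L_Ω‖²_{HS} ≤ ‖L_{Ω*}‖²_{HS} − c₁β(|Ω|)α[Ω]^κ cannot hold with any κ < 2. -/

import Mathlib

/-!
Write `B₁ = D ∪ G` and `Ω_ε = D ∪ A`, where `D` is the closed ball of radius `1 - ε`, `G` the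
shell it leaves in `B₁` and `A` the outer annulus; the volume constraint forces `|A| = |G| = O(ε)`
and `δ(ε) ≤ ε`. Expanding the double integrals, `‖L_{B₁}‖² - ‖L_{Ω_ε}‖²` is
`2 (∫_G ψ - ∫_A ψ) + O(|G|²)`, where `ψ` is the Gaussian potential of `D`. As `ψ` is radial and
Lipschitz, it varies by `O(ε)` on `G ∪ A`, which lies within `ε` of the unit sphere, so the
difference is `O(ε²)`.

The balls with the volume of `Ω_ε` are the unit balls `B(c, 1)`. If `|c| ≤ 1`, then `B(c, 1)`
contains the part of the shell `G` inside a fixed cone around `c`, of measure `≳ ε`; otherwise it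
contains a ball of radius `1 / 8` outside `Ω_ε`. Hence `α[Ω_ε] ≳ ε`, and `C ε² < c (c_d ε)^κ` for
small `ε` when `κ < 2`.
-/

open MeasureTheory

noncomputable def hsSq {n : ℕ} (Ω : Set (EuclideanSpace ℝ (Fin n))) : ℝ :=
  ∫ z in Ω, ∫ w in Ω, Real.exp (-Real.pi * dist z w ^ 2)

/-- The Fraenkel asymmetry index of a set `Ω` of finite positive measure. -/
noncomputable def fraenkelAsymmetry {n : ℕ} (Ω : Set (EuclideanSpace ℝ (Fin n))) : ℝ :=
  sInf {t : ℝ | ∃ (c : EuclideanSpace ℝ (Fin n)) (ρ : ℝ),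
    volume (Metric.ball c ρ) = volume Ω ∧
    t = (volume (symmDiff Ω (Metric.ball c ρ))).toReal / (volume Ω).toReal}

/-- The perturbed set `Ω_ε` (ball of radius `1-ε` together with an annulus). -/
def perturbedSet (d : ℕ) (δ : ℝ → ℝ) (ε : ℝ) : Set (EuclideanSpace ℝ (Fin (2 * d))) :=
  {z | ‖z‖ ≤ 1 - ε ∨ (1 ≤ ‖z‖ ∧ ‖z‖ ≤ 1 + δ ε)}

open Metric Real Set Filter Topology Module
open scoped InnerProductSpace Pointwise

lemma lipschitzWith_exp_neg_pi_mul_sq : LipschitzWith 2 (fun s : ℝ => exp (-π * s ^ 2)) := by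
  have hderiv (s : ℝ) : HasDerivAt (fun s : ℝ => exp (-π * s ^ 2))
      (exp (-π * s ^ 2) * (-π * (2 * s))) s := by
    simpa using ((hasDerivAt_pow 2 s).const_mul (-π)).exp
  refine lipschitzWith_of_nnnorm_deriv_le (fun s => (hderiv s).differentiableAt) fun s => ?_
  rw [(hderiv s).deriv, ← NNReal.coe_le_coe, coe_nnnorm, norm_mul, Real.norm_of_nonneg
    (exp_pos _).le]
  -- `2π|s| ≤ 2 (1 + π s²)` because `π ≤ 4`, and `1 + π s² ≤ exp (π s²)`
  have hlin : ‖-π * (2 * s)‖ ≤ 2 * (1 + π * s ^ 2) := by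
    rw [norm_mul, norm_neg, norm_mul, Real.norm_of_nonneg pi_pos.le, Real.norm_two,
      Real.norm_eq_abs]
    nlinarith [mul_nonneg pi_pos.le (sq_nonneg (|s| - 1 / 2)), pi_le_four, sq_abs s]
  calc exp (-π * s ^ 2) * ‖-π * (2 * s)‖ ≤ exp (-π * s ^ 2) * (2 * exp (π * s ^ 2)) := by
        gcongr
        linarith [add_one_le_exp (π * s ^ 2)]
    _ = 2 := by rw [mul_left_comm, ← exp_add]; simp

section Kernel

variable {X : Type*} [PseudoMetricSpace X]

noncomputable def gaussKernel (z w : X) : ℝ := exp (-π * dist z w ^ 2)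

lemma gaussKernel_comm (z w : X) : gaussKernel z w = gaussKernel w z := by
  rw [gaussKernel, gaussKernel, dist_comm]

lemma norm_gaussKernel_le_one (z w : X) : ‖gaussKernel z w‖ ≤ 1 := by
  rw [gaussKernel, Real.norm_of_nonneg (exp_pos _).le, exp_le_one_iff]
  nlinarith [pi_pos, sq_nonneg (dist z w)]

lemma continuous_gaussKernel : Continuous (fun p : X × X => gaussKernel p.1 p.2) := by
  unfold gaussKernel
  fun_prop

lemma lipschitzWith_gaussKernel_left (w : X) : LipschitzWith 2 (gaussKernel · w) := by
  have h := lipschitzWith_exp_neg_pi_mul_sq.comp (LipschitzWith.dist_left w)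
  rw [mul_one] at h
  exact h

variable [MeasureSpace X]

noncomputable def gaussPotential (S : Set X) (z : X) : ℝ := ∫ w in S, gaussKernel z w

noncomputable def pairIntegral (S T : Set X) : ℝ := ∫ z in S, gaussPotential T z

variable {S T U : Set X}

lemma gaussPotential_nonneg (z : X) : 0 ≤ gaussPotential S z :=
  integral_nonneg fun _ => (exp_pos _).le

lemma pairIntegral_nonneg : 0 ≤ pairIntegral S T :=
  integral_nonneg gaussPotential_nonneg

lemma norm_gaussPotential_le (hS : volume S ≠ ⊤) (z : X) :
    ‖gaussPotential S z‖ ≤ volume.real S :=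
  (norm_setIntegral_le_of_norm_le_const hS.lt_top
    fun w _ => norm_gaussKernel_le_one z w).trans_eq (one_mul _)

lemma pairIntegral_le (hS : volume S ≠ ⊤) (hT : volume T ≠ ⊤) :
    pairIntegral S T ≤ volume.real S * volume.real T := by
  refine (le_abs_self _).trans ?_
  rw [← Real.norm_eq_abs, mul_comm]
  exact norm_setIntegral_le_of_norm_le_const hS.lt_top fun z _ => norm_gaussPotential_le hT z

variable [OpensMeasurableSpace X]

lemma integrableOn_gaussKernel (hS : volume S ≠ ⊤) (z : X) : IntegrableOn (gaussKernel z) S :=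
  Measure.integrableOn_of_bounded hS
    (continuous_gaussKernel.comp (Continuous.prodMk_right z)).aestronglyMeasurable
    (Eventually.of_forall (norm_gaussKernel_le_one z))

lemma dist_gaussPotential_le (hS : volume S ≠ ⊤) (z w : X) :
    dist (gaussPotential S z) (gaussPotential S w) ≤ 2 * volume.real S * dist z w := by
  rw [dist_eq_norm, gaussPotential, gaussPotential,
    ← integral_sub (integrableOn_gaussKernel hS z) (integrableOn_gaussKernel hS w)]
  refine (norm_setIntegral_le_of_norm_le_const (C := 2 * dist z w) hS.lt_top fun x _ => ?_).trans_eq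
    (by ring)
  rw [← dist_eq_norm]
  exact (lipschitzWith_gaussKernel_left x).dist_le_mul z w

lemma continuous_gaussPotential (hS : volume S ≠ ⊤) : Continuous (gaussPotential S) :=
  (LipschitzWith.of_dist_le_mul (K := (2 * volume.real S).toNNReal) fun z w =>
    (dist_gaussPotential_le hS z w).trans_eq (by
      rw [Real.coe_toNNReal _ (by positivity)])).continuous

lemma integrableOn_gaussPotential (hS : volume S ≠ ⊤) (hT : volume T ≠ ⊤) :
    IntegrableOn (gaussPotential T) S :=
  Measure.integrableOn_of_bounded hS (continuous_gaussPotential hT).aestronglyMeasurable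
    (Eventually.of_forall (norm_gaussPotential_le hT))

lemma gaussPotential_union (hST : Disjoint S T) (hTm : MeasurableSet T) (hS : volume S ≠ ⊤)
    (hT : volume T ≠ ⊤) (z : X) :
    gaussPotential (S ∪ T) z = gaussPotential S z + gaussPotential T z :=
  setIntegral_union hST hTm (integrableOn_gaussKernel hS z) (integrableOn_gaussKernel hT z)

lemma pairIntegral_union_left (hST : Disjoint S T) (hTm : MeasurableSet T) (hS : volume S ≠ ⊤)
    (hT : volume T ≠ ⊤) (hU : volume U ≠ ⊤) :
    pairIntegral (S ∪ T) U = pairIntegral S U + pairIntegral T U :=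
  setIntegral_union hST hTm (integrableOn_gaussPotential hS hU) (integrableOn_gaussPotential hT hU)

lemma pairIntegral_union_right (hST : Disjoint S T) (hTm : MeasurableSet T) (hS : volume S ≠ ⊤)
    (hT : volume T ≠ ⊤) (hU : volume U ≠ ⊤) :
    pairIntegral U (S ∪ T) = pairIntegral U S + pairIntegral U T := by
  simp_rw [pairIntegral, gaussPotential_union hST hTm hS hT]
  exact integral_add (integrableOn_gaussPotential hU hS) (integrableOn_gaussPotential hU hT)

variable [SecondCountableTopology X]

lemma pairIntegral_comm (hS : volume S ≠ ⊤) (hT : volume T ≠ ⊤) :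
    pairIntegral S T = pairIntegral T S := by
  have : IsFiniteMeasure (volume.restrict S) := isFiniteMeasure_restrict.2 hS
  have : IsFiniteMeasure (volume.restrict T) := isFiniteMeasure_restrict.2 hT
  have hint : Integrable (Function.uncurry gaussKernel)
      ((volume.restrict S).prod (volume.restrict T)) :=
    .of_bound continuous_gaussKernel.aestronglyMeasurable 1
      (Eventually.of_forall fun p => norm_gaussKernel_le_one p.1 p.2)
  simp_rw [pairIntegral, gaussPotential, integral_integral_swap hint, gaussKernel_comm]

lemma pairIntegral_union_self (hST : Disjoint S T) (hTm : MeasurableSet T) (hS : volume S ≠ ⊤)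
    (hT : volume T ≠ ⊤) :
    pairIntegral (S ∪ T) (S ∪ T)
      = pairIntegral S S + 2 * pairIntegral S T + pairIntegral T T := by
  have hST' : volume (S ∪ T) ≠ ⊤ := measure_union_ne_top hS hT
  rw [pairIntegral_union_left hST hTm hS hT hST', pairIntegral_union_right hST hTm hS hT hS,
    pairIntegral_union_right hST hTm hS hT hT, pairIntegral_comm hT hS]
  ring

lemma pairIntegral_union_sub_pairIntegral_union_le {D G A : Set X}
    (hGm : MeasurableSet G) (hAm : MeasurableSet A) (hD : volume D ≠ ⊤) (hG : volume G ≠ ⊤)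
    (hA : volume A ≠ ⊤) (hDG : Disjoint D G) (hDA : Disjoint D A)
    (hGA : volume.real G = volume.real A) {ψ₀ η : ℝ}
    (hG_le : ∀ z ∈ G, gaussPotential D z ≤ ψ₀ + η)
    (hA_ge : ∀ z ∈ A, ψ₀ - η ≤ gaussPotential D z) :
    pairIntegral (D ∪ G) (D ∪ G) - pairIntegral (D ∪ A) (D ∪ A)
      ≤ 4 * η * volume.real G + volume.real G ^ 2 := by
  have hDG_le : pairIntegral D G ≤ volume.real G * (ψ₀ + η) :=
    calc pairIntegral D G = pairIntegral G D := pairIntegral_comm hD hG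
      _ ≤ ∫ _ in G, (ψ₀ + η) :=
        setIntegral_mono_on (integrableOn_gaussPotential hG hD) (integrableOn_const hG) hGm hG_le
      _ = volume.real G * (ψ₀ + η) := by rw [setIntegral_const, smul_eq_mul]
  have hDA_ge : (ψ₀ - η) * volume.real G ≤ pairIntegral D A := by
    rw [hGA, pairIntegral_comm hD hA]
    exact setIntegral_ge_of_const_le_real hAm hA hA_ge (integrableOn_gaussPotential hA hD)
  rw [pairIntegral_union_self hDG hGm hD hG, pairIntegral_union_self hDA hAm hD hA]
  linarith [pairIntegral_le hG hG, pairIntegral_nonneg (S := A) (T := A)]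

end Kernel

section Radial

variable {E : Type*} [NormedAddCommGroup E] [InnerProductSpace ℝ E]

lemma exists_linearIsometryEquiv_apply_eq {z w : E} (h : ‖z‖ = ‖w‖) :
    ∃ R : E ≃ₗᵢ[ℝ] E, R z = w :=
  ⟨_, Submodule.reflection_sub h⟩

variable [FiniteDimensional ℝ E] [MeasurableSpace E] [BorelSpace E]

lemma gaussPotential_preimage_linearIsometryEquiv (R : E ≃ₗᵢ[ℝ] E) (S : Set E) (z : E) :
    gaussPotential (R ⁻¹' S) z = gaussPotential S (R z) := by
  simp_rw [gaussPotential, gaussKernel, ← R.dist_map z]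
  exact R.measurePreserving.setIntegral_preimage_emb R.toHomeomorph.measurableEmbedding
    (fun y => exp (-π * dist (R z) y ^ 2)) S

lemma gaussPotential_closedBall_eq_of_norm_eq (r : ℝ) {z w : E} (h : ‖z‖ = ‖w‖) :
    gaussPotential (closedBall 0 r) z = gaussPotential (closedBall 0 r) w := by
  obtain ⟨R, rfl⟩ := exists_linearIsometryEquiv_apply_eq h
  rw [← gaussPotential_preimage_linearIsometryEquiv, R.preimage_closedBall, map_zero]

lemma abs_gaussPotential_closedBall_sub_le (r : ℝ) {u : E} (hu : ‖u‖ = 1) (z : E) :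
    |gaussPotential (closedBall 0 r) z - gaussPotential (closedBall 0 r) u|
      ≤ 2 * volume.real (closedBall (0 : E) r) * |‖z‖ - 1| := by
  have hz : ‖z‖ = ‖‖z‖ • u‖ := by rw [norm_smul, hu, norm_norm, mul_one]
  have hdist : dist (‖z‖ • u) u = |‖z‖ - 1| := by
    rw [dist_eq_norm, show ‖z‖ • u - u = (‖z‖ - 1) • u by rw [sub_smul, one_smul], norm_smul,
      hu, mul_one, Real.norm_eq_abs]
  rw [gaussPotential_closedBall_eq_of_norm_eq r hz, ← hdist, ← Real.dist_eq]
  exact dist_gaussPotential_le measure_closedBall_lt_top.ne _ _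

end Radial

lemma one_sub_mul_le_one_sub_pow {ε : ℝ} (h : ε ≤ 2) (n : ℕ) : 1 - n * ε ≤ (1 - ε) ^ n := by
  simpa [sub_eq_add_neg] using one_add_mul_le_pow (a := -ε) (by linarith) n

section Annulus

variable {E : Type*} [NormedAddCommGroup E] {ε δ : ℝ}

def ballWithAnnulus (ε δ : ℝ) : Set E := closedBall 0 (1 - ε) ∪ (closedBall 0 (1 + δ) \ ball 0 1)

lemma measurableSet_ballWithAnnulus [MeasurableSpace E] [OpensMeasurableSpace E] (ε δ : ℝ) :
    MeasurableSet (ballWithAnnulus ε δ : Set E) :=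
  measurableSet_closedBall.union (measurableSet_closedBall.diff measurableSet_ball)

lemma ballWithAnnulus_subset_closedBall (hε : 0 ≤ ε) (hδ : 0 ≤ δ) :
    (ballWithAnnulus ε δ : Set E) ⊆ closedBall 0 (1 + δ) :=
  union_subset (closedBall_subset_closedBall (by linarith)) sdiff_subset

lemma disjoint_ballWithAnnulus_ball_sdiff_ball {r : ℝ} (hr : 1 - ε < r) :
    Disjoint (ballWithAnnulus ε δ : Set E) (ball 0 1 \ ball 0 r) :=
  disjoint_union_left.2 ⟨(disjoint_sdiff_right.mono_left (closedBall_subset_ball hr)),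
    disjoint_sdiff_left.mono_right sdiff_subset⟩

variable [InnerProductSpace ℝ E] [FiniteDimensional ℝ E] [MeasurableSpace E] [BorelSpace E]

lemma measureReal_ball_pos (x : E) {r : ℝ} (hr : 0 < r) : 0 < volume.real (ball x r) :=
  ENNReal.toReal_pos (measure_ball_pos _ _ hr).ne' measure_ball_lt_top.ne

lemma measureReal_ball_sdiff_closedBall {r : ℝ} (h0 : 0 ≤ r) (h1 : r < 1) :
    volume.real (ball (0 : E) 1 \ closedBall 0 r)
      = (1 - r ^ finrank ℝ E) * volume.real (ball (0 : E) 1) := by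
  rw [measureReal_sdiff (closedBall_subset_ball h1) measurableSet_closedBall,
    Measure.addHaar_real_closedBall _ _ h0]
  ring

lemma measureReal_ball_sdiff_closedBall_le (hε : 0 < ε) (hε1 : ε ≤ 1) :
    volume.real (ball (0 : E) 1 \ closedBall 0 (1 - ε))
      ≤ finrank ℝ E * ε * volume.real (ball (0 : E) 1) := by
  rw [measureReal_ball_sdiff_closedBall (by linarith) (by linarith)]
  nlinarith [one_sub_mul_le_one_sub_pow (ε := ε) (by linarith) (finrank ℝ E),
    measureReal_nonneg (μ := volume) (s := ball (0 : E) 1)]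

lemma measureReal_closedBall_sdiff_ball {R : ℝ} (h : 1 ≤ R) :
    volume.real (closedBall (0 : E) R \ ball 0 1)
      = (R ^ finrank ℝ E - 1) * volume.real (ball (0 : E) 1) := by
  rw [measureReal_sdiff (ball_subset_closedBall.trans (closedBall_subset_closedBall h))
    measurableSet_ball measure_closedBall_lt_top.ne,
    Measure.addHaar_real_closedBall _ _ (by linarith)]
  ring

lemma measureReal_annulus_eq_of_volume_ballWithAnnulus_eq (hε : 0 < ε)
    (hvol : volume (ballWithAnnulus ε δ : Set E) = volume (ball (0 : E) 1)) :
    volume.real (closedBall (0 : E) (1 + δ) \ ball 0 1)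
      = volume.real (ball (0 : E) 1 \ closedBall 0 (1 - ε)) := by
  have hsub : closedBall (0 : E) (1 - ε) ⊆ ball 0 1 := closedBall_subset_ball (by linarith)
  have hball : volume.real (ball (0 : E) 1) = volume.real (closedBall (0 : E) (1 - ε))
      + volume.real (ball (0 : E) 1 \ closedBall 0 (1 - ε)) := by
    rw [← measureReal_union disjoint_sdiff_right (measurableSet_ball.diff measurableSet_closedBall)
      measure_closedBall_lt_top.ne (measure_ne_top_of_subset sdiff_subset measure_ball_lt_top.ne),
      union_sdiff_cancel hsub]
  have hΩ : volume.real (ball (0 : E) 1) = volume.real (closedBall (0 : E) (1 - ε))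
      + volume.real (closedBall (0 : E) (1 + δ) \ ball 0 1) := by
    rw [← measureReal_union (disjoint_sdiff_right.mono_left hsub)
      (measurableSet_closedBall.diff measurableSet_ball) measure_closedBall_lt_top.ne
      (measure_ne_top_of_subset sdiff_subset measure_closedBall_lt_top.ne), measureReal_def,
      measureReal_def, ← hvol]
    rfl
  linarith

lemma le_of_volume_ballWithAnnulus_eq [Nontrivial E] (hε : 0 < ε) (hε1 : ε < 1) (hδ : 0 ≤ δ)
    (hvol : volume (ballWithAnnulus ε δ : Set E) = volume (ball (0 : E) 1)) : δ ≤ ε := by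
  have h := measureReal_annulus_eq_of_volume_ballWithAnnulus_eq hε hvol
  rw [measureReal_closedBall_sdiff_ball (by linarith), measureReal_ball_sdiff_closedBall
    (by linarith) (by linarith), mul_left_inj' (measureReal_ball_pos 0 one_pos).ne'] at h
  have hn : (0 : ℝ) < finrank ℝ E := by exact_mod_cast finrank_pos
  nlinarith [one_add_mul_le_pow (a := δ) (by linarith) (finrank ℝ E),
    one_sub_mul_le_one_sub_pow (ε := ε) (by linarith) (finrank ℝ E)]

lemma pairIntegral_ball_sub_pairIntegral_ballWithAnnulus_le [Nontrivial E] (hε : 0 < ε)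
    (hε1 : ε < 1) (hδ : 0 ≤ δ)
    (hvol : volume (ballWithAnnulus ε δ : Set E) = volume (ball (0 : E) 1)) :
    pairIntegral (ball (0 : E) 1) (ball 0 1)
        - pairIntegral (ballWithAnnulus ε δ : Set E) (ballWithAnnulus ε δ)
      ≤ (8 * finrank ℝ E + finrank ℝ E ^ 2) * volume.real (ball (0 : E) 1) ^ 2 * ε ^ 2 := by
  set n := finrank ℝ E
  set V := volume.real (ball (0 : E) 1)
  set D := closedBall (0 : E) (1 - ε)
  set G := ball (0 : E) 1 \ D
  set A := closedBall (0 : E) (1 + δ) \ ball 0 1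
  have hDsub : D ⊆ ball 0 1 := closedBall_subset_ball (by linarith)
  have hδε := le_of_volume_ballWithAnnulus_eq hε hε1 hδ hvol
  obtain ⟨u, hu⟩ := exists_norm_eq E zero_le_one
  have hclose : ∀ z : E, |‖z‖ - 1| ≤ ε →
      |gaussPotential D z - gaussPotential D u| ≤ 2 * volume.real D * ε := fun z hz =>
    (abs_gaussPotential_closedBall_sub_le _ hu z).trans (by gcongr)
  have hG_le : ∀ z ∈ G, gaussPotential D z ≤ gaussPotential D u + 2 * volume.real D * ε := by
    rintro z ⟨hz1, hz2⟩
    simp only [D, mem_ball_zero_iff, mem_closedBall_zero_iff, not_le] at hz1 hz2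
    linarith [(abs_le.1 (hclose z (abs_le.2 ⟨by linarith, by linarith⟩))).2]
  have hA_ge : ∀ z ∈ A, gaussPotential D u - 2 * volume.real D * ε ≤ gaussPotential D z := by
    rintro z ⟨hz1, hz2⟩
    simp only [mem_ball_zero_iff, mem_closedBall_zero_iff, not_lt] at hz1 hz2
    linarith [(abs_le.1 (hclose z (abs_le.2 ⟨by linarith, by linarith⟩))).1]
  have key := pairIntegral_union_sub_pairIntegral_union_le
    (measurableSet_ball.diff measurableSet_closedBall)
    (measurableSet_closedBall.diff measurableSet_ball) measure_closedBall_lt_top.ne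
    (measure_ne_top_of_subset sdiff_subset measure_ball_lt_top.ne)
    (measure_ne_top_of_subset sdiff_subset measure_closedBall_lt_top.ne) disjoint_sdiff_right
    (disjoint_sdiff_right.mono_left hDsub)
    (measureReal_annulus_eq_of_volume_ballWithAnnulus_eq hε hvol).symm hG_le hA_ge
  rw [union_sdiff_cancel hDsub] at key
  have hDV : volume.real D ≤ V := measureReal_mono hDsub
  have hGV : volume.real G ≤ n * ε * V := measureReal_ball_sdiff_closedBall_le hε hε1.le
  have hcross : volume.real D * volume.real G ≤ V * (n * ε * V) :=
    mul_le_mul hDV hGV measureReal_nonneg measureReal_nonneg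
  have hGG : volume.real G ^ 2 ≤ (n * ε * V) ^ 2 := pow_le_pow_left₀ measureReal_nonneg hGV 2
  refine key.trans ?_
  nlinarith

end Annulus

section Cone

variable {E : Type*} [NormedAddCommGroup E] [InnerProductSpace ℝ E]

/-- For a unit vector `u`, the closed cone of half-angle `π / 3` around `u`. -/
def coneAround (u : E) : Set E := {z | ‖z‖ ≤ 2 * ⟪z, u⟫_ℝ}

lemma isClosed_coneAround (u : E) : IsClosed (coneAround u) :=
  isClosed_le (by fun_prop) (by fun_prop)

lemma smul_coneAround {r : ℝ} (hr : 0 < r) (u : E) : r • coneAround u = coneAround u := by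
  ext z
  simp only [mem_smul_set_iff_inv_smul_mem₀ hr.ne', coneAround, mem_ofPred_eq, norm_smul,
    real_inner_smul_left, Real.norm_of_nonneg (inv_nonneg.2 hr.le), mul_left_comm (2 : ℝ)]
  exact mul_le_mul_iff_right₀ (inv_pos.2 hr)

lemma exists_norm_eq_one_smul_eq [Nontrivial E] (c : E) : ∃ u : E, ‖u‖ = 1 ∧ ‖c‖ • u = c := by
  rcases eq_or_ne c 0 with rfl | hc
  · obtain ⟨u, hu⟩ := exists_norm_eq E zero_le_one
    exact ⟨u, hu, by simp⟩
  · exact ⟨‖c‖⁻¹ • c, norm_smul_inv_norm hc,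
      by rw [smul_smul, mul_inv_cancel₀ (norm_ne_zero_iff.2 hc), one_smul]⟩

lemma ball_sdiff_ball_inter_coneAround_subset_ball {r : ℝ} (hr : 0 < r) {u c : E}
    (hcu : ‖c‖ • u = c) (hc : ‖c‖ ≤ 1) :
    (ball 0 1 \ ball 0 r) ∩ coneAround u ⊆ ball c 1 := by
  rintro z ⟨⟨hz1, hzr⟩, hzK⟩
  simp only [mem_ball_zero_iff, not_lt] at hz1 hzr
  have hzc : ‖z‖ * ‖c‖ ≤ 2 * ⟪z, c⟫_ℝ := by
    conv_rhs => rw [← hcu, real_inner_smul_right]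
    linarith [mul_le_mul_of_nonneg_right hzK (norm_nonneg c)]
  -- `‖z - c‖² ≤ ‖z‖² - ‖z‖ ‖c‖ + ‖c‖² < 1` for `0 < ‖z‖ < 1` and `‖c‖ ≤ 1`
  have hsq : ‖z - c‖ ^ 2 < 1 := by
    rw [norm_sub_sq_real]
    nlinarith [mul_pos (sub_pos.2 hz1) (by linarith : 0 < ‖z‖ + 1 - ‖c‖),
      mul_nonneg (norm_nonneg c) (sub_nonneg.2 hc)]
  rw [mem_ball_iff_norm]
  exact (pow_lt_one_iff_of_nonneg (norm_nonneg _) two_ne_zero).1 hsq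

variable [FiniteDimensional ℝ E] [MeasurableSpace E] [BorelSpace E]

lemma volume_ball_inter_coneAround {r : ℝ} (hr : 0 < r) (u : E) :
    volume (ball (0 : E) r ∩ coneAround u)
      = ENNReal.ofReal (r ^ finrank ℝ E) * volume (ball (0 : E) 1 ∩ coneAround u) := by
  have : ball (0 : E) r ∩ coneAround u = r • (ball 0 1 ∩ coneAround u) := by
    rw [smul_set_inter₀ hr.ne', smul_coneAround hr, _root_.smul_ball hr.ne', smul_zero,
      Real.norm_of_nonneg hr.le, mul_one]
  rw [this, Measure.addHaar_smul, abs_of_nonneg (by positivity)]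

lemma volume_ball_inter_coneAround_congr {u v : E} (h : ‖u‖ = ‖v‖) :
    volume (ball (0 : E) 1 ∩ coneAround u) = volume (ball (0 : E) 1 ∩ coneAround v) := by
  obtain ⟨R, rfl⟩ := exists_linearIsometryEquiv_apply_eq h
  have : R ⁻¹' (ball 0 1 ∩ coneAround (R u)) = ball 0 1 ∩ coneAround u := by
    ext z
    simp [coneAround, R.inner_map_map]
  rw [← this, R.measurePreserving.measure_preimage
    (measurableSet_ball.inter (isClosed_coneAround _).measurableSet).nullMeasurableSet]

lemma volume_ball_inter_coneAround_pos {u : E} (hu : ‖u‖ = 1) :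
    0 < volume (ball (0 : E) 1 ∩ coneAround u) := by
  have hopen : IsOpen (ball (0 : E) 1 ∩ {z | ‖z‖ < 2 * ⟪z, u⟫_ℝ}) :=
    isOpen_ball.inter (isOpen_lt (by fun_prop) (by fun_prop))
  have hmem : (2⁻¹ : ℝ) • u ∈ ball (0 : E) 1 ∩ {z | ‖z‖ < 2 * ⟪z, u⟫_ℝ} := by
    simp only [mem_inter_iff, mem_ball_zero_iff, mem_ofPred_eq, norm_smul, real_inner_smul_left,
      real_inner_self_eq_norm_sq, hu]
    norm_num
  exact (hopen.measure_pos volume ⟨_, hmem⟩).trans_le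
    (measure_mono (inter_subset_inter_right _
      fun z (hz : ‖z‖ < 2 * ⟪z, u⟫_ℝ) => show ‖z‖ ≤ 2 * ⟪z, u⟫_ℝ from hz.le))

lemma measureReal_ball_sdiff_ball_inter_coneAround {r : ℝ} (hr0 : 0 < r) (hr1 : r ≤ 1) (u : E) :
    volume.real ((ball (0 : E) 1 \ ball 0 r) ∩ coneAround u)
      = (1 - r ^ finrank ℝ E) * volume.real (ball (0 : E) 1 ∩ coneAround u) := by
  rw [inter_sdiff_distrib_right,
    measureReal_sdiff (inter_subset_inter_left _ (ball_subset_ball hr1))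
    (measurableSet_ball.inter (isClosed_coneAround u).measurableSet)
    (measure_ne_top_of_subset inter_subset_left measure_ball_lt_top.ne), measureReal_def,
    measureReal_def, volume_ball_inter_coneAround hr0, ENNReal.toReal_mul,
    ENNReal.toReal_ofReal (by positivity)]
  ring

lemma min_le_measureReal_ball_sdiff [Nontrivial E] {u : E} (hu : ‖u‖ = 1) {r : ℝ} (hr0 : 0 < r)
    (hr1 : r ≤ 1) {Ω : Set E} (hΩ_shell : Disjoint Ω (ball 0 1 \ ball 0 r))
    (hΩ_sub : Ω ⊆ closedBall 0 (3 / 2)) (c : E) :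
    min ((1 - r ^ finrank ℝ E) * volume.real (ball (0 : E) 1 ∩ coneAround u))
        (volume.real (ball (0 : E) (1 / 8)))
      ≤ volume.real (ball c 1 \ Ω) := by
  obtain ⟨v, hv, hcv⟩ := exists_norm_eq_one_smul_eq c
  have hfin : volume (ball c 1 \ Ω) ≠ ⊤ :=
    measure_ne_top_of_subset sdiff_subset measure_ball_lt_top.ne
  rcases le_or_gt ‖c‖ 1 with hc | hc
  · -- the part of the gap `ball 0 1 \ ball 0 r` in the cone around `c` lies in `ball c 1`
    refine (min_le_left _ _).trans ?_
    rw [measureReal_def, volume_ball_inter_coneAround_congr (hu.trans hv.symm), ← measureReal_def,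
      ← measureReal_ball_sdiff_ball_inter_coneAround hr0 hr1]
    exact measureReal_mono (fun z hz => ⟨ball_sdiff_ball_inter_coneAround_subset_ball hr0 hcv hc hz,
      fun hzΩ => hΩ_shell.ne_of_mem hzΩ hz.1 rfl⟩) hfin
  · -- a ball of radius `1 / 8` in `ball c 1` beyond radius `3 / 2`
    refine (min_le_right _ _).trans ?_
    set p := (‖c‖ + 3 / 4) • v
    have hpc : dist p c = 3 / 4 := by
      rw [← hcv, dist_eq_norm, ← sub_smul, add_sub_cancel_left, norm_smul, hv, mul_one,
        Real.norm_of_nonneg (by norm_num)]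
    have hp : ‖p‖ = ‖c‖ + 3 / 4 := by
      rw [norm_smul, hv, mul_one, Real.norm_of_nonneg (by positivity)]
    rw [← Measure.addHaar_real_ball_center volume p]
    refine measureReal_mono (fun w hw => ⟨?_, fun hwΩ => ?_⟩) hfin
    · rw [mem_ball] at hw ⊢
      linarith [dist_triangle w p c]
    · have := norm_sub_norm_le p w
      rw [mem_ball, dist_eq_norm, ← norm_neg, neg_sub] at hw
      linarith [mem_closedBall_zero_iff.1 (hΩ_sub hwΩ)]

end Cone

lemma eq_one_of_volume_ball_eq {E : Type*} [NormedAddCommGroup E] [InnerProductSpace ℝ E]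
    [FiniteDimensional ℝ E] [MeasurableSpace E] [BorelSpace E] [Nontrivial E] {c : E} {ρ : ℝ}
    (h : volume (ball c ρ) = volume (ball (0 : E) 1)) : ρ = 1 := by
  have hρ : 0 < ρ := by
    by_contra! hρ
    rw [ball_eq_empty.2 hρ, measure_empty] at h
    exact (measure_ball_pos volume (0 : E) one_pos).ne' h.symm
  have h' := congrArg ENNReal.toReal h
  rw [Measure.addHaar_ball volume c hρ.le, ENNReal.toReal_mul,
    ENNReal.toReal_ofReal (by positivity),
    ← measureReal_def, mul_eq_right₀ (measureReal_ball_pos 0 one_pos).ne'] at h'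
  exact (pow_eq_one_iff_of_nonneg hρ.le finrank_pos.ne').1 h'

lemma div_le_fraenkelAsymmetry {n : ℕ} [NeZero n] {Ω : Set (EuclideanSpace ℝ (Fin n))} {m : ℝ}
    (hΩ : volume Ω = volume (ball (0 : EuclideanSpace ℝ (Fin n)) 1))
    (hm : ∀ c, m ≤ volume.real (ball c 1 \ Ω)) :
    m / volume.real (ball (0 : EuclideanSpace ℝ (Fin n)) 1) ≤ fraenkelAsymmetry Ω := by
  refine le_csInf ⟨_, 0, 1, hΩ.symm, rfl⟩ ?_
  rintro t ⟨c, ρ, hρ, rfl⟩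
  obtain rfl := eq_one_of_volume_ball_eq (hρ.trans hΩ)
  have hfin : volume (symmDiff Ω (ball c 1)) ≠ ⊤ :=
    measure_ne_top_of_subset (symmDiff_subset_union)
      (measure_union_ne_top (hΩ ▸ measure_ball_lt_top.ne) measure_ball_lt_top.ne)
  have hΩr : volume.real Ω = volume.real (ball (0 : EuclideanSpace ℝ (Fin n)) 1) := by
    simp only [measureReal_def, hΩ]
  change _ ≤ volume.real _ / volume.real Ω
  rw [hΩr]
  gcongr
  exact (hm c).trans (measureReal_mono (by rw [Set.symmDiff_def]; exact subset_union_right) hfin)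

lemma eventually_mul_sq_lt_mul_rpow {C a c κ : ℝ} (ha : 0 < a) (hc : 0 < c) (hκ : κ < 2) :
    ∀ᶠ ε in 𝓝[>] 0, C * ε ^ 2 < c * (a * ε) ^ κ := by
  have hlim : Tendsto (fun ε : ℝ => C * ε ^ (2 - κ)) (𝓝[>] 0) (𝓝 0) := by
    have := ((continuous_rpow_const (by linarith : 0 ≤ 2 - κ)).tendsto 0).const_mul C
    rw [zero_rpow (by linarith), mul_zero] at this
    exact this.mono_left nhdsWithin_le_nhds
  filter_upwards [hlim.eventually (gt_mem_nhds (by positivity : 0 < c * a ^ κ)),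
    self_mem_nhdsWithin] with ε hε (hε0 : 0 < ε)
  calc C * ε ^ 2 = C * ε ^ (2 - κ) * ε ^ κ := by
        rw [mul_assoc, ← rpow_add hε0, sub_add_cancel, rpow_two]
    _ < c * a ^ κ * ε ^ κ := mul_lt_mul_of_pos_right hε (rpow_pos_of_pos hε0 κ)
    _ = c * (a * ε) ^ κ := by rw [mul_rpow ha.le hε0.le, mul_assoc]

lemma eventually_nhdsGT_zero_iff {p : ℝ → Prop} :
    (∀ᶠ ε in 𝓝[>] 0, p ε) ↔ ∃ ε₀ > 0, ∀ ε, 0 < ε → ε < ε₀ → p ε := by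
  rw [(nhdsGT_basis 0).eventually_iff]
  simp only [mem_Ioo, and_imp, gt_iff_lt]

section PerturbedSet

variable {d : ℕ} {δ : ℝ → ℝ}

lemma perturbedSet_eq_ballWithAnnulus (ε : ℝ) :
    perturbedSet d δ ε = ballWithAnnulus ε (δ ε) := by
  ext z
  simp only [perturbedSet, ballWithAnnulus, mem_ofPred_eq, mem_union, mem_closedBall_zero_iff,
    Set.mem_sdiff, mem_ball_zero_iff, not_lt]
  exact or_congr_right and_comm

lemma hsSq_eq_pairIntegral {n : ℕ} (Ω : Set (EuclideanSpace ℝ (Fin n))) :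
    hsSq Ω = pairIntegral Ω Ω :=
  rfl

lemma measurableSet_perturbedSet (ε : ℝ) :
    MeasurableSet (perturbedSet d δ ε) := by
  rw [perturbedSet_eq_ballWithAnnulus]
  exact measurableSet_ballWithAnnulus _ _

lemma exists_pos_eventually_hsSq_ball_sub_le [NeZero d]
    (hδ : ∀ᶠ ε in 𝓝[>] 0, 0 < δ ε ∧
      volume (perturbedSet d δ ε) = volume (ball (0 : EuclideanSpace ℝ (Fin (2 * d))) 1)) :
    ∃ C > 0, ∀ᶠ ε in 𝓝[>] 0,
      hsSq (ball (0 : EuclideanSpace ℝ (Fin (2 * d))) 1) - hsSq (perturbedSet d δ ε)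
        ≤ C * ε ^ 2 := by
  set n : ℝ := (finrank ℝ (EuclideanSpace ℝ (Fin (2 * d))) : ℝ)
  have hn : 0 < n := Nat.cast_pos.2 finrank_pos
  have hV := measureReal_ball_pos (0 : EuclideanSpace ℝ (Fin (2 * d))) one_pos
  refine ⟨(8 * n + n ^ 2) * volume.real (ball (0 : EuclideanSpace ℝ (Fin (2 * d))) 1) ^ 2,
    by positivity, ?_⟩
  filter_upwards [hδ, Ioo_mem_nhdsGT one_pos] with ε ⟨hδ0, hvol⟩ ⟨hε0, hε1⟩
  rw [perturbedSet_eq_ballWithAnnulus] at hvol ⊢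
  rw [hsSq_eq_pairIntegral, hsSq_eq_pairIntegral]
  exact pairIntegral_ball_sub_pairIntegral_ballWithAnnulus_le hε0 hε1 hδ0.le hvol

lemma exists_pos_eventually_le_fraenkelAsymmetry [NeZero d]
    (hδ : ∀ᶠ ε in 𝓝[>] 0, 0 < δ ε ∧
      volume (perturbedSet d δ ε) = volume (ball (0 : EuclideanSpace ℝ (Fin (2 * d))) 1)) :
    ∃ a > 0, ∀ᶠ ε in 𝓝[>] 0, a * ε ≤ fraenkelAsymmetry (perturbedSet d δ ε) := by
  obtain ⟨u, hu⟩ := exists_norm_eq (EuclideanSpace ℝ (Fin (2 * d))) zero_le_one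
  set κ₀ := volume.real (ball 0 1 ∩ coneAround u)
  set V := volume.real (ball (0 : EuclideanSpace ℝ (Fin (2 * d))) 1)
  set v₀ := volume.real (ball (0 : EuclideanSpace ℝ (Fin (2 * d))) (1 / 8))
  have hκ₀ : 0 < κ₀ := ENNReal.toReal_pos (volume_ball_inter_coneAround_pos hu).ne'
    (measure_ne_top_of_subset inter_subset_left measure_ball_lt_top.ne)
  have hV : 0 < V := measureReal_ball_pos 0 one_pos
  have hv₀ : 0 < v₀ := measureReal_ball_pos 0 (by norm_num)
  refine ⟨κ₀ / (2 * V), by positivity, ?_⟩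
  filter_upwards [hδ, Ioo_mem_nhdsGT (lt_min (by norm_num : (0 : ℝ) < 1 / 2)
    (by positivity : 0 < 2 * v₀ / κ₀))] with ε ⟨hδ0, hvol⟩ ⟨hε0, hε1⟩
  have hε_half : ε < 1 / 2 := hε1.trans_le (min_le_left _ _)
  have hε_v₀ : ε / 2 * κ₀ ≤ v₀ := by
    have := hε1.trans_le (min_le_right _ _)
    rw [lt_div_iff₀ hκ₀] at this
    linarith
  rw [perturbedSet_eq_ballWithAnnulus] at hvol ⊢
  have hδε := le_of_volume_ballWithAnnulus_eq hε0 (by linarith) hδ0.le hvol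
  have hgap : ε / 2 ≤ 1 - (1 - ε / 2) ^ finrank ℝ (EuclideanSpace ℝ (Fin (2 * d))) := by
    linarith [pow_le_of_le_one (by linarith : (0 : ℝ) ≤ 1 - ε / 2) (by linarith)
      (finrank_pos (R := ℝ) (M := EuclideanSpace ℝ (Fin (2 * d)))).ne']
  have hmin : ∀ c, ε / 2 * κ₀ ≤ volume.real (ball c 1 \ ballWithAnnulus ε (δ ε)) := fun c =>
    (le_min (by gcongr) hε_v₀).trans (min_le_measureReal_ball_sdiff hu (r := 1 - ε / 2)
      (by linarith) (by linarith)
      (disjoint_ballWithAnnulus_ball_sdiff_ball (by linarith))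
      ((ballWithAnnulus_subset_closedBall hε0.le hδ0.le).trans
        (closedBall_subset_closedBall (by linarith))) c)
  calc κ₀ / (2 * V) * ε = ε / 2 * κ₀ / V := by field_simp
    _ ≤ _ := div_le_fraenkelAsymmetry hvol hmin

end PerturbedSet

theorem sharpness_of_exponent_two (d : ℕ) (hd : 0 < d) (δ : ℝ → ℝ)
    (hδ : ∀ ε : ℝ, 0 < ε → ε < 1 → 0 < δ ε ∧
      volume (perturbedSet d δ ε)
        = volume (Metric.ball (0 : EuclideanSpace ℝ (Fin (2 * d))) 1)) :
    (∃ C > (0 : ℝ), ∃ ε₀ > (0 : ℝ), ∀ ε : ℝ, 0 < ε → ε < ε₀ →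
        hsSq (Metric.ball (0 : EuclideanSpace ℝ (Fin (2 * d))) 1)
            - hsSq (perturbedSet d δ ε) ≤ C * ε ^ 2) ∧
      (∃ c_d > (0 : ℝ), ∃ ε₀ > (0 : ℝ), ∀ ε : ℝ, 0 < ε → ε < ε₀ →
        c_d * ε ≤ fraenkelAsymmetry (perturbedSet d δ ε)) ∧
      ∀ κ : ℝ, 0 ≤ κ → κ < 2 → ∀ c > (0 : ℝ),
        ¬ ∀ Ω : Set (EuclideanSpace ℝ (Fin (2 * d))), MeasurableSet Ω →
            volume Ω = volume (Metric.ball (0 : EuclideanSpace ℝ (Fin (2 * d))) 1) →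
            hsSq Ω ≤ hsSq (Metric.ball (0 : EuclideanSpace ℝ (Fin (2 * d))) 1)
              - c * fraenkelAsymmetry Ω ^ κ := by
  have : NeZero d := ⟨hd.ne'⟩
  have hδ' : ∀ᶠ ε in 𝓝[>] 0, 0 < δ ε ∧
      volume (perturbedSet d δ ε) = volume (ball (0 : EuclideanSpace ℝ (Fin (2 * d))) 1) := by
    filter_upwards [Ioo_mem_nhdsGT one_pos] with ε hε using hδ ε hε.1 hε.2
  obtain ⟨C, hC, hupper⟩ := exists_pos_eventually_hsSq_ball_sub_le hδ'
  obtain ⟨a, ha, hlower⟩ := exists_pos_eventually_le_fraenkelAsymmetry hδ'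
  refine ⟨⟨C, hC, eventually_nhdsGT_zero_iff.1 hupper⟩,
    ⟨a, ha, eventually_nhdsGT_zero_iff.1 hlower⟩, fun κ hκ0 hκ2 c hc hall => ?_⟩
  obtain ⟨ε, hlt, hε_upper, hε_lower, ⟨-, hε_vol⟩, hε0⟩ :=
    ((eventually_mul_sq_lt_mul_rpow (C := C) ha hc hκ2).and
      (hupper.and (hlower.and (hδ'.and self_mem_nhdsWithin)))).exists
  have hall_ε := hall _ (measurableSet_perturbedSet ε) hε_vol
  have hrpow := rpow_le_rpow (by positivity) hε_lower hκ0
  linarith [mul_le_mul_of_nonneg_left hrpow hc.le]
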